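/- Every edge-coloring of K_n with m ≥ 2 colors contains a monochromatic connected subgraph on at least n/(m−1) vertices. -/
import Mathlib


open Finset SimpleGraph

/-- A graph is `k`-connected if it has more than `k` vertices and removing any
set of fewer than `k` vertices leaves it connected. -/
def KConn {V : Type*} [Fintype V] (k : ℕ) (G : SimpleGraph V) : Prop :=
  k + 1 ≤ Fintype.card V ∧
    ∀ s : Finset V, s.card < k → (G.induce ((↑s : Set V)ᶜ)).Connected

/-- The host graph `B`, edge-colored by `c`, contains a rainbow copy of the
pattern graph `H`. -/
def RainbowCopy {W V α : Type*} (H : SimpleGraph W) (B : SimpleGraph V)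
    (c : Sym2 V → α) : Prop :=
  ∃ f : W → V, Function.Injective f ∧
    (∀ a b, H.Adj a b → B.Adj (f a) (f b)) ∧
    ∀ a b a' b', H.Adj a b → H.Adj a' b' →
      c s(f a, f b) = c s(f a', f b') → s(a, b) = s(a', b')

/-- Disjoint union of two simple graphs. -/
def disjUnion' {α β : Type*} (G : SimpleGraph α) (H : SimpleGraph β) :
    SimpleGraph (α ⊕ β) :=
  SimpleGraph.fromRel fun x y =>
    (∃ a b, x = Sum.inl a ∧ y = Sum.inl b ∧ G.Adj a b) ∨
    (∃ a b, x = Sum.inr a ∧ y = Sum.inr b ∧ H.Adj a b)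

/-- The monochromatic subgraph of `Kₙ` in color `i`. -/
def monoGraph {n m : ℕ} (c : Sym2 (Fin n) → Fin m) (i : Fin m) : SimpleGraph (Fin n) :=
  SimpleGraph.fromRel fun x y => c s(x, y) = i

/-- The subgraph of `Kₙ` using the two colors `i` and `j`. -/
def twoColorGraph {n m : ℕ} (c : Sym2 (Fin n) → Fin m) (i j : Fin m) : SimpleGraph (Fin n) :=
  SimpleGraph.fromRel fun x y => c s(x, y) = i ∨ c s(x, y) = j

/-- The coloring `c` of `Kₙ` uses all `m` colors. -/
def UsesAll {n m : ℕ} (c : Sym2 (Fin n) → Fin m) : Prop :=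
  ∀ i : Fin m, ∃ x y : Fin n, x ≠ y ∧ c s(x, y) = i

/-- No rainbow triangle. -/
def GallaiColoring {n m : ℕ} (c : Sym2 (Fin n) → Fin m) : Prop :=
  ¬ ∃ u v w : Fin n, u ≠ v ∧ v ≠ w ∧ u ≠ w ∧
    c s(u, v) ≠ c s(v, w) ∧ c s(v, w) ≠ c s(u, w) ∧ c s(u, v) ≠ c s(u, w)

/-- Monochromatic subgraph of `K_{s,t}` in color `i`. -/
def monoBiGraph {s t m : ℕ} (c : Sym2 (Fin s ⊕ Fin t) → Fin m) (i : Fin m) :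
    SimpleGraph (Fin s ⊕ Fin t) :=
  SimpleGraph.fromRel fun x y =>
    (completeBipartiteGraph (Fin s) (Fin t)).Adj x y ∧ c s(x, y) = i

/-- The coloring of `K_{s,t}` uses all `m` colors. -/
def UsesAllBi {s t m : ℕ} (c : Sym2 (Fin s ⊕ Fin t) → Fin m) : Prop :=
  ∀ i : Fin m, ∃ (u : Fin s) (v : Fin t), c s(Sum.inl u, Sum.inr v) = i

/-- Monochromatic path on `a` vertices in color `i`. -/
def HasMonoPath {n m : ℕ} (c : Sym2 (Fin n) → Fin m) (i : Fin m) (a : ℕ) : Prop :=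
  ∃ f : Fin a → Fin n, Function.Injective f ∧
    ∀ (j : ℕ) (h : j + 1 < a), c s(f ⟨j, by omega⟩, f ⟨j + 1, h⟩) = i

private lemma monoGraph_adj' {n m : ℕ} (c : Sym2 (Fin n) → Fin m) (i : Fin m) (x y : Fin n) :
    (monoGraph c i).Adj x y ↔ x ≠ y ∧ c s(x, y) = i := by
  unfold monoGraph
  rw [SimpleGraph.fromRel_adj]
  constructor
  · rintro ⟨hne, h | h⟩
    · exact ⟨hne, h⟩
    · exact ⟨hne, by rwa [Sym2.eq_swap]⟩
  · rintro ⟨hne, h⟩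
    exact ⟨hne, Or.inl h⟩

private lemma induce_reach_connected {V : Type*} (G : SimpleGraph V) (v : V) :
    (G.induce {x | G.Reachable v x}).Connected := by
  have hv : v ∈ {x | G.Reachable v x} := SimpleGraph.Reachable.refl v
  have key : ∀ (u x : V) (p : G.Walk u x) (hu : G.Reachable v u) (hx : G.Reachable v x),
      (G.induce {y | G.Reachable v y}).Reachable ⟨u, hu⟩ ⟨x, hx⟩ := by
    intro u x p
    induction p with
    | nil =>
      intro hu hx
      have : (⟨_, hu⟩ : {y | G.Reachable v y}) = ⟨_, hx⟩ := Subtype.ext rfl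
      rw [this]
    | @cons u w x h q ih =>
      intro hu hx
      have hw : G.Reachable v w := hu.trans h.reachable
      have hadj : (G.induce {y | G.Reachable v y}).Adj ⟨u, hu⟩ ⟨w, hw⟩ := h
      exact hadj.reachable.trans (ih hw hx)
  rw [SimpleGraph.connected_iff]
  refine ⟨?_, ⟨⟨v, hv⟩⟩⟩
  intro u w
  obtain ⟨x, hx⟩ := u
  obtain ⟨y, hy⟩ := w
  have hx2 : G.Reachable v x := hx
  have hy2 : G.Reachable v y := hy
  obtain ⟨p⟩ := hx2
  obtain ⟨q⟩ := hy2
  exact (key v x p (SimpleGraph.Reachable.refl v) hx).symm.trans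
    (key v y q (SimpleGraph.Reachable.refl v) hy)

/-- Every `m`-coloring of `Kₙ` (`m ≥ 2`) has a monochromatic connected subgraph
on at least `n/(m−1)` vertices. -/
theorem stmt_14 (n m : ℕ) (hn : 1 ≤ n) (hm : 2 ≤ m) (c : Sym2 (Fin n) → Fin m) :
    ∃ (i : Fin m) (S : Finset (Fin n)),
      (n : ℝ) / ((m : ℝ) - 1) ≤ S.card ∧
      ((monoGraph c i).induce (↑S : Set (Fin n))).Connected := by
  classical
  have hm1 : (1 : ℝ) ≤ (m : ℝ) - 1 := by
    have : (2 : ℝ) ≤ (m : ℝ) := by exact_mod_cast hm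
    linarith
  have hk0 : (0 : ℝ) < (m : ℝ) - 1 := by linarith
  set v₀ : Fin n := ⟨0, hn⟩ with hv₀def
  set i₀ : Fin m := ⟨m - 1, by omega⟩ with hi₀def
  set A : Finset (Fin n) := Finset.univ.filter (fun x => (monoGraph c i₀).Reachable v₀ x)
    with hAdef
  have hv₀A : v₀ ∈ A := by
    rw [hAdef]
    exact Finset.mem_filter.mpr ⟨Finset.mem_univ _, SimpleGraph.Reachable.refl v₀⟩
  by_cases hAuniv : A = Finset.univ
  · refine ⟨i₀, Finset.univ, ?_, ?_⟩
    · rw [Finset.card_univ, Fintype.card_fin]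
      exact div_le_self (by positivity) hm1
    · have hset : ((Finset.univ : Finset (Fin n)) : Set (Fin n))
          = {x | (monoGraph c i₀).Reachable v₀ x} := by
        ext x
        simp only [Finset.coe_univ, Set.mem_univ, true_iff, Set.mem_setOf_eq]
        have hx : x ∈ A := hAuniv ▸ Finset.mem_univ x
        rw [hAdef] at hx
        exact (Finset.mem_filter.mp hx).2
      rw [hset]
      exact induce_reach_connected _ v₀
  · set B : Finset (Fin n) := Finset.univ \ A with hBdef
    have hBne : B.Nonempty := by
      rw [hBdef, Finset.sdiff_nonempty]
      intro hsub
      exact hAuniv (Finset.univ_subset_iff.mp hsub)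
    have hAB : ∀ x ∈ A, ∀ y ∈ B, x ≠ y := by
      intro x hx y hy h
      subst h
      exact (Finset.mem_sdiff.mp hy).2 hx
    have hcross : ∀ a ∈ A, ∀ y ∈ B, c s(a, y) ≠ i₀ := by
      intro a ha y hy h
      have hadj : (monoGraph c i₀).Adj a y :=
        (monoGraph_adj' c i₀ a y).mpr ⟨hAB a ha y hy, h⟩
      have hra : (monoGraph c i₀).Reachable v₀ a := by
        rw [hAdef] at ha; exact (Finset.mem_filter.mp ha).2
      have hry : (monoGraph c i₀).Reachable v₀ y := hra.trans hadj.reachable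
      have : y ∈ A := by
        rw [hAdef]; exact Finset.mem_filter.mpr ⟨Finset.mem_univ y, hry⟩
      exact (Finset.mem_sdiff.mp hy).2 this
    set K : Finset (Fin m) := Finset.univ.erase i₀ with hKdef
    have hKcard : (K.card : ℝ) = (m : ℝ) - 1 := by
      rw [hKdef, Finset.card_erase_of_mem (Finset.mem_univ _), Finset.card_univ,
        Fintype.card_fin, Nat.cast_sub (by omega : 1 ≤ m), Nat.cast_one]
    set D : Fin n → Fin m → ℕ := fun a j => (B.filter fun y => c s(a, y) = j).card with hDdef
    set E : Fin n → Fin m → ℕ := fun y j => (A.filter fun x => c s(x, y) = j).card with hEdef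
    have hmapsA : ∀ a ∈ A, ∀ y ∈ B, c s(a, y) ∈ K := by
      intro a ha y hy
      rw [hKdef]
      exact Finset.mem_erase.mpr ⟨hcross a ha y hy, Finset.mem_univ _⟩
    have hmapsB : ∀ y ∈ B, ∀ a ∈ A, c s(a, y) ∈ K := fun y hy a ha => hmapsA a ha y hy
    -- row sums
    have hDsum : ∀ a ∈ A, ∑ j ∈ K, (D a j : ℝ) = (B.card : ℝ) := by
      intro a ha
      rw [← Nat.cast_sum]
      norm_cast
      exact (Finset.card_eq_sum_card_fiberwise (fun y hy => hmapsA a ha y hy)).symm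
    have hEsum : ∀ y ∈ B, ∑ j ∈ K, (E y j : ℝ) = (A.card : ℝ) := by
      intro y hy
      rw [← Nat.cast_sum]
      norm_cast
      exact (Finset.card_eq_sum_card_fiberwise (f := fun a => c s(a, y))
        (fun a ha => hmapsB y hy a ha)).symm
    -- fiberwise squared sums
    have hDsq : ∀ a ∈ A, ∑ y ∈ B, (D a (c s(a, y)) : ℝ) = ∑ j ∈ K, (D a j : ℝ) ^ 2 := by
      intro a ha
      rw [← Finset.sum_fiberwise_of_maps_to' (fun y hy => hmapsA a ha y hy)
        (fun j => (D a j : ℝ))]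
      refine Finset.sum_congr rfl fun j _ => ?_
      rw [Finset.sum_const, hDdef, nsmul_eq_mul, sq]
    have hEsq : ∀ y ∈ B, ∑ a ∈ A, (E y (c s(a, y)) : ℝ) = ∑ j ∈ K, (E y j : ℝ) ^ 2 := by
      intro y hy
      rw [← Finset.sum_fiberwise_of_maps_to' (g := fun a => c s(a, y))
        (fun a ha => hmapsB y hy a ha) (fun j => (E y j : ℝ))]
      refine Finset.sum_congr rfl fun j _ => ?_
      rw [Finset.sum_const, hEdef, nsmul_eq_mul, sq]
    -- Cauchy–Schwarz
    have hDcs : ∀ a ∈ A, (B.card : ℝ) ^ 2 ≤ ((m : ℝ) - 1) * ∑ j ∈ K, (D a j : ℝ) ^ 2 := by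
      intro a ha
      have h := sq_sum_le_card_mul_sum_sq (s := K) (f := fun j => (D a j : ℝ))
      rw [hDsum a ha] at h
      calc (B.card : ℝ) ^ 2 ≤ (K.card : ℝ) * ∑ j ∈ K, (D a j : ℝ) ^ 2 := h
        _ = _ := by rw [hKcard]
    have hEcs : ∀ y ∈ B, (A.card : ℝ) ^ 2 ≤ ((m : ℝ) - 1) * ∑ j ∈ K, (E y j : ℝ) ^ 2 := by
      intro y hy
      have h := sq_sum_le_card_mul_sum_sq (s := K) (f := fun j => (E y j : ℝ))
      rw [hEsum y hy] at h
      calc (A.card : ℝ) ^ 2 ≤ (K.card : ℝ) * ∑ j ∈ K, (E y j : ℝ) ^ 2 := h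
        _ = _ := by rw [hKcard]
    set N : ℝ := (A.card : ℝ) with hNdef
    set M : ℝ := (B.card : ℝ) with hMdef
    have hN1 : 1 ≤ N := by
      rw [hNdef]; exact_mod_cast Finset.card_pos.mpr ⟨v₀, hv₀A⟩
    have hM1 : 1 ≤ M := by
      rw [hMdef]; exact_mod_cast Finset.card_pos.mpr hBne
    have hNM : N + M = (n : ℝ) := by
      rw [hNdef, hMdef, hBdef]
      rw [Finset.card_sdiff_of_subset (Finset.subset_univ A), Finset.card_univ, Fintype.card_fin]
      have hle : A.card ≤ n :=
        le_trans (Finset.card_le_card (Finset.subset_univ A)) (by simp)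
      rw [Nat.cast_sub hle]
      ring
    set k : ℝ := (m : ℝ) - 1 with hkdef
    -- two double-counting bounds
    have hsum1 : N * (M ^ 2 / k) ≤ ∑ a ∈ A, ∑ y ∈ B, (D a (c s(a, y)) : ℝ) := by
      have : ∀ a ∈ A, M ^ 2 / k ≤ ∑ y ∈ B, (D a (c s(a, y)) : ℝ) := by
        intro a ha
        rw [hDsq a ha, div_le_iff₀ hk0]
        calc M ^ 2 ≤ k * ∑ j ∈ K, (D a j : ℝ) ^ 2 := hDcs a ha
          _ = (∑ j ∈ K, (D a j : ℝ) ^ 2) * k := mul_comm _ _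
      calc N * (M ^ 2 / k) = ∑ _a ∈ A, M ^ 2 / k := by
            rw [Finset.sum_const, nsmul_eq_mul, hNdef]
        _ ≤ _ := Finset.sum_le_sum this
    have hsum2 : M * (N ^ 2 / k) ≤ ∑ y ∈ B, ∑ a ∈ A, (E y (c s(a, y)) : ℝ) := by
      have : ∀ y ∈ B, N ^ 2 / k ≤ ∑ a ∈ A, (E y (c s(a, y)) : ℝ) := by
        intro y hy
        rw [hEsq y hy, div_le_iff₀ hk0]
        calc N ^ 2 ≤ k * ∑ j ∈ K, (E y j : ℝ) ^ 2 := hEcs y hy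
          _ = (∑ j ∈ K, (E y j : ℝ) ^ 2) * k := mul_comm _ _
      calc M * (N ^ 2 / k) = ∑ _y ∈ B, N ^ 2 / k := by
            rw [Finset.sum_const, nsmul_eq_mul, hMdef]
        _ ≤ _ := Finset.sum_le_sum this
    -- the grand double count
    have hT : (N * M) * ((n : ℝ) / k) ≤
        ∑ p ∈ A ×ˢ B, ((D p.1 (c s(p.1, p.2)) : ℝ) + (E p.2 (c s(p.1, p.2)) : ℝ)) := by
      rw [Finset.sum_product]
      have hsplit : ∑ a ∈ A, ∑ y ∈ B,
            ((D a (c s(a, y)) : ℝ) + (E y (c s(a, y)) : ℝ))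
          = (∑ a ∈ A, ∑ y ∈ B, (D a (c s(a, y)) : ℝ))
            + ∑ y ∈ B, ∑ a ∈ A, (E y (c s(a, y)) : ℝ) := by
        rw [Finset.sum_comm (s := B) (t := A)
          (f := fun y a => (E y (c s(a, y)) : ℝ))]
        rw [← Finset.sum_add_distrib]
        refine Finset.sum_congr rfl fun a _ => ?_
        rw [← Finset.sum_add_distrib]
      rw [hsplit]
      have harith : (N * M) * ((n : ℝ) / k) = N * (M ^ 2 / k) + M * (N ^ 2 / k) := by
        rw [← hNM]
        field_simp
        ring
      rw [harith]
      exact add_le_add hsum1 hsum2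
    -- pigeonhole: some pair achieves the average
    obtain ⟨b₀, hb₀⟩ := hBne
    have hprodne : (A ×ˢ B).Nonempty := ⟨(v₀, b₀), Finset.mem_product.mpr ⟨hv₀A, hb₀⟩⟩
    have hconst : ∑ _p ∈ A ×ˢ B, ((n : ℝ) / k)
        ≤ ∑ p ∈ A ×ˢ B, ((D p.1 (c s(p.1, p.2)) : ℝ) + (E p.2 (c s(p.1, p.2)) : ℝ)) := by
      calc ∑ _p ∈ A ×ˢ B, ((n : ℝ) / k) = (N * M) * ((n : ℝ) / k) := by
            rw [Finset.sum_const, nsmul_eq_mul, Finset.card_product, hNdef, hMdef]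
            push_cast
            ring
        _ ≤ _ := hT
    obtain ⟨p, hp, hple⟩ := Finset.exists_le_of_sum_le hprodne hconst
    obtain ⟨a, b⟩ := p
    rw [Finset.mem_product] at hp
    obtain ⟨haA, hbB⟩ := hp
    set c₀ : Fin m := c s(a, b) with hc₀def
    -- the double star
    set S : Finset (Fin n) :=
      (B.filter fun y => c s(a, y) = c₀) ∪ (A.filter fun x => c s(x, b) = c₀) with hSdef
    have hdisj : Disjoint (B.filter fun y => c s(a, y) = c₀)
        (A.filter fun x => c s(x, b) = c₀) := by
      refine Finset.disjoint_filter_filter ?_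
      rw [hBdef]
      exact Finset.sdiff_disjoint
    have hScard : (S.card : ℝ) = (D a c₀ : ℝ) + (E b c₀ : ℝ) := by
      rw [hSdef, Finset.card_union_of_disjoint hdisj, hDdef, hEdef]
      push_cast
      ring
    have haS : a ∈ S := by
      rw [hSdef]
      refine Finset.mem_union_right _ (Finset.mem_filter.mpr ⟨haA, ?_⟩)
      rw [hc₀def]
    have hbS : b ∈ S := by
      rw [hSdef]
      refine Finset.mem_union_left _ (Finset.mem_filter.mpr ⟨hbB, ?_⟩)
      rw [hc₀def]
    refine ⟨c₀, S, ?_, ?_⟩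
    · rw [hScard]
      exact hple
    · -- connectivity of the double star
      have hadjab : (monoGraph c c₀).Adj a b :=
        (monoGraph_adj' c c₀ a b).mpr ⟨hAB a haA b hbB, hc₀def.symm⟩
      have hub : ∀ (u : Fin n) (hu : u ∈ (S : Set (Fin n))),
          ((monoGraph c c₀).induce (S : Set (Fin n))).Reachable ⟨u, hu⟩
            ⟨a, by exact_mod_cast haS⟩ := by
        intro u hu
        have huS : u ∈ S := by exact_mod_cast hu
        rw [hSdef] at huS
        rcases Finset.mem_union.mp huS with h | h
        · obtain ⟨huB, hcu⟩ := Finset.mem_filter.mp h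
          have hadj : (monoGraph c c₀).Adj a u :=
            (monoGraph_adj' c c₀ a u).mpr ⟨hAB a haA u huB, hcu⟩
          have hadj' : ((monoGraph c c₀).induce (S : Set (Fin n))).Adj
              ⟨u, hu⟩ ⟨a, by exact_mod_cast haS⟩ := hadj.symm
          exact hadj'.reachable
        · obtain ⟨huA, hcu⟩ := Finset.mem_filter.mp h
          by_cases hua : u = a
          · subst hua
            have : (⟨u, hu⟩ : (S : Set (Fin n))) = ⟨u, by exact_mod_cast haS⟩ :=
              Subtype.ext rfl
            rw [this]
          · have hadj1 : (monoGraph c c₀).Adj u b :=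
              (monoGraph_adj' c c₀ u b).mpr ⟨hAB u huA b hbB, hcu⟩
            have hadj1' : ((monoGraph c c₀).induce (S : Set (Fin n))).Adj
                ⟨u, hu⟩ ⟨b, by exact_mod_cast hbS⟩ := hadj1
            have hadj2' : ((monoGraph c c₀).induce (S : Set (Fin n))).Adj
                ⟨b, by exact_mod_cast hbS⟩ ⟨a, by exact_mod_cast haS⟩ := hadjab.symm
            exact hadj1'.reachable.trans hadj2'.reachable
      rw [SimpleGraph.connected_iff]
      refine ⟨?_, ⟨⟨a, by exact_mod_cast haS⟩⟩⟩
      rintro ⟨x, hx⟩ ⟨y, hy⟩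
      exact (hub x hx).trans (hub y hy).symm
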